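/- arXiv:1303.4114 — 2 statements merged into one kernel-verified Lean document; each statement's English description precedes it below -/
import Mathlib

section
/- For the effective bandwidth r_θ of a Markov-modulated On-Off source with peak rate P, transition rates λ, μ, and steady-state On probability p = μ/(λ+μ): r_θ = (-(λ+μ-θP) + √((λ+μ-θP)² + 4μθP))/(2θ) satisfies pP ≤ r_θ ≤ P for all θ > 0, and r_θ is non-decreasing in θ. -/
/-!
`r θ` is the largest root of the quadratic `θ x² + (λ + μ - θ P) x - μ P`. For a quadratic with
positive leading coefficient, a point lies below the largest root as soon as the quadratic is
nonpositive there, and a positive point lies above it as soon as the quadratic is nonnegative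
there (the constant term being nonpositive). Evaluating the quadratic at `p P` gives
`θ p P (p P - P) ≤ 0` and at `P` gives `λ P ≥ 0`, whence the bounds. For monotonicity, at
`y = r θ₂` the quadratic for `θ₁` equals `(θ₂ - θ₁) y (P - y) ≥ 0`, using `y ≤ P`.
-/

open Real

/-- The largest root of `A x² + B x - C` when `A > 0`. -/
noncomputable def quadRoot (A B C : ℝ) : ℝ := (-B + √(B ^ 2 + 4 * A * C)) / (2 * A)

section QuadRoot

variable {A B C y : ℝ}

theorem quadRoot_isRoot (hA : A ≠ 0) (hD : 0 ≤ B ^ 2 + 4 * A * C) :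
    A * quadRoot A B C ^ 2 + B * quadRoot A B C = C := by
  have hsq := sq_sqrt hD
  unfold quadRoot
  set s := √(B ^ 2 + 4 * A * C)
  field_simp
  linear_combination hsq

theorem le_quadRoot (hA : 0 < A) (hy : A * y ^ 2 + B * y ≤ C) : y ≤ quadRoot A B C := by
  have hsq : (2 * A * y + B) ^ 2 ≤ B ^ 2 + 4 * A * C := by nlinarith
  have hlin : 2 * A * y + B ≤ √(B ^ 2 + 4 * A * C) :=
    (le_abs_self _).trans (abs_le_sqrt hsq)
  rw [quadRoot, le_div_iff₀ (by positivity)]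
  linarith

theorem quadRoot_le (hA : 0 < A) (hy : 0 < y) (hC : 0 ≤ C) (hy' : C ≤ A * y ^ 2 + B * y) :
    quadRoot A B C ≤ y := by
  have hvertex : 0 ≤ 2 * A * y + B := by nlinarith
  have hsq : B ^ 2 + 4 * A * C ≤ (2 * A * y + B) ^ 2 := by nlinarith
  have hlin : √(B ^ 2 + 4 * A * C) ≤ 2 * A * y + B := sqrt_le_iff.mpr ⟨hvertex, hsq⟩
  rw [quadRoot, div_le_iff₀ (by positivity)]
  linarith

end QuadRoot

section MMOO

variable {lam mu P θ : ℝ}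

theorem mul_peak_le_quadRoot (hlam : 0 ≤ lam) (hmu : 0 ≤ mu) (hs : 0 < lam + mu)
    (hP : 0 ≤ P) (hθ : 0 < θ) :
    mu / (lam + mu) * P ≤ quadRoot θ (lam + mu - θ * P) (mu * P) := by
  apply le_quadRoot hθ
  set y := mu / (lam + mu) * P
  have hy : 0 ≤ y := by positivity
  have hyP : y ≤ P := mul_le_of_le_one_left hP ((div_le_one hs).mpr (by linarith))
  have hval : θ * y ^ 2 + (lam + mu - θ * P) * y = θ * y * (y - P) + mu * P := by
    simp only [y]
    field_simp
    ring
  rw [hval]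
  nlinarith [mul_nonneg (mul_nonneg hθ.le hy) (sub_nonneg.mpr hyP)]

theorem quadRoot_le_peak (hlam : 0 ≤ lam) (hmu : 0 ≤ mu) (hP : 0 < P) (hθ : 0 < θ) :
    quadRoot θ (lam + mu - θ * P) (mu * P) ≤ P := by
  apply quadRoot_le hθ hP (by positivity)
  · nlinarith [mul_nonneg hlam hP.le]

theorem quadRoot_mono_of_le_peak {θ₁ θ₂ : ℝ} (h₁ : 0 < θ₁) (h₁₂ : θ₁ ≤ θ₂) (hC : 0 ≤ mu * P)
    (hpos : 0 < quadRoot θ₂ (lam + mu - θ₂ * P) (mu * P))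
    (hle : quadRoot θ₂ (lam + mu - θ₂ * P) (mu * P) ≤ P) :
    quadRoot θ₁ (lam + mu - θ₁ * P) (mu * P) ≤ quadRoot θ₂ (lam + mu - θ₂ * P) (mu * P) := by
  set y := quadRoot θ₂ (lam + mu - θ₂ * P) (mu * P)
  have hroot : θ₂ * y ^ 2 + (lam + mu - θ₂ * P) * y = mu * P :=
    quadRoot_isRoot (h₁.trans_le h₁₂).ne' (by nlinarith [sq_nonneg (lam + mu - θ₂ * P)])
  apply quadRoot_le h₁ hpos hC
  calc mu * P = θ₁ * y ^ 2 + (lam + mu - θ₁ * P) * y - (θ₂ - θ₁) * (y * (P - y)) := by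
        linear_combination -hroot
    _ ≤ θ₁ * y ^ 2 + (lam + mu - θ₁ * P) * y := by
        have := mul_nonneg (sub_nonneg.mpr h₁₂) (mul_nonneg hpos.le (sub_nonneg.mpr hle))
        linarith

end MMOO

/-- The effective bandwidth `r_θ` of an MMOO source with peak rate `P`, rates `λ, μ`,
and steady-state On probability `p = μ/(λ+μ)` satisfies `pP ≤ r_θ ≤ P` for all `θ > 0`,
and `θ ↦ r_θ` is non-decreasing on `(0, ∞)`. -/
theorem effective_bandwidth_bounds
    (lam mu P : ℝ) (hlam : 0 < lam) (hmu : 0 < mu) (hP : 0 < P)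
    (p : ℝ) (hp : p = mu / (lam + mu))
    (r : ℝ → ℝ)
    (hr : ∀ θ : ℝ, r θ =
      (-(lam + mu - θ * P) + Real.sqrt ((lam + mu - θ * P) ^ 2 + 4 * mu * θ * P)) / (2 * θ)) :
    (∀ θ : ℝ, 0 < θ → p * P ≤ r θ ∧ r θ ≤ P) ∧
      (∀ θ₁ θ₂ : ℝ, 0 < θ₁ → θ₁ ≤ θ₂ → r θ₁ ≤ r θ₂) := by
  have hr' : ∀ θ, r θ = quadRoot θ (lam + mu - θ * P) (mu * P) := fun θ => by
    rw [hr, quadRoot]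
    ring_nf
  have hbounds : ∀ θ : ℝ, 0 < θ → p * P ≤ r θ ∧ r θ ≤ P := fun θ hθ => by
    rw [hp, hr']
    exact ⟨mul_peak_le_quadRoot hlam.le hmu.le (by positivity) hP.le hθ,
      quadRoot_le_peak hlam.le hmu.le hP hθ⟩
  refine ⟨hbounds, fun θ₁ θ₂ h₁ h₁₂ => ?_⟩
  obtain ⟨hlo, hhi⟩ := hbounds θ₂ (h₁.trans_le h₁₂)
  have hpos : 0 < r θ₂ := lt_of_lt_of_le (by rw [hp]; positivity) hlo
  rw [hr'] at hpos hhi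
  rw [hr' θ₁, hr' θ₂]
  exact quadRoot_mono_of_le_peak h₁ h₁₂ (by positivity) hpos hhi
end

section
/- Under the hypotheses of the Martingale Sample-Path Bound (n independent stationary MMOO sources with rates μ, λ, peak rate P, server rate C = nc, p < ρ < 1, P > c), the FIFO virtual delay satisfies P(W_1(t) > d) ≤ K^n e^{-γ C d}, where K = ρ((ρ-p)/(1-p))^{p/ρ-1} and γ = (λ+μ)(1-ρ)/(P-c), given the sample-path bound P(sup_{0≤s<t-u}{A_1(s,t-u)+A_2(s,t)-C(t-s)} > σ) ≤ K^n e^{-γ(C_1 u + σ)} and the FIFO service process S_1(s,t) = [C(t-s) - A_2(s,t-x)]_+ · 1{t-s > x} with x = d. -/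
open MeasureTheory

/-!
On the event `W₁(t) > d` the flow-1 arrivals `A₁(t - d)` still exceed the departures `D₁(t)`.
Bounding `D₁(t)` below by the FIFO service curve with parameter `x = d`, this forces some
`s < t - d` with `A₁(s, t - d) + A₂(s, t - d) - C(t - d - s) > C d`, which is the event of the
martingale sample-path bound at `u = 0`, `σ = C d`, evaluated at time `t - d`.
-/

/-- The paper's FIFO service process `S₁(s, t)` of flow 1 against cross traffic `A₂`. -/
noncomputable def fifoService (C x : ℝ) (A₂ : ℝ → ℝ) (s t : ℝ) : ℝ :=
  if t - s > x then max (C * (t - s) - (A₂ (t - x) - A₂ s)) 0 else 0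

noncomputable def virtualDelay (A : ℝ → ℝ) (D t : ℝ) : ℝ :=
  sInf {e | 0 ≤ e ∧ A (t - e) ≤ D}

theorem virtualDelay_le {A : ℝ → ℝ} {D t x : ℝ} (hx : 0 ≤ x) (h : A (t - x) ≤ D) :
    virtualDelay A D t ≤ x :=
  csInf_le ⟨0, fun _ he => he.1⟩ ⟨hx, h⟩

theorem le_iInf_add_fifoService {A₁ A₂ : ℝ → ℝ} (hA₁ : Monotone A₁) {C t x : ℝ} (ht : 0 ≤ t)
    (h : ∀ s, 0 ≤ s → s < t - x →
      A₁ (t - x) - A₁ s + (A₂ (t - x) - A₂ s) - C * (t - x - s) ≤ C * x) :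
    A₁ (t - x) ≤ ⨅ s : Set.Icc (0 : ℝ) t, (A₁ s + fifoService C x A₂ s t) := by
  have : Nonempty (Set.Icc (0 : ℝ) t) := ⟨⟨0, le_rfl, ht⟩⟩
  refine le_ciInf fun ⟨s, hs0, _⟩ => ?_
  unfold fifoService
  split_ifs with hs
  · have hbacklog := h s hs0 (by linarith)
    have hmax := le_max_left (C * (t - s) - (A₂ (t - x) - A₂ s)) 0
    linarith
  · simpa using hA₁ (by linarith : t - x ≤ s)

theorem exists_backlog_gt_of_lt_virtualDelay {A₁ A₂ : ℝ → ℝ} (hA₁ : Monotone A₁)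
    {C D t x : ℝ} (hx : 0 ≤ x) (hxt : x ≤ t)
    (hD : ⨅ s : Set.Icc (0 : ℝ) t, (A₁ s + fifoService C x A₂ s t) ≤ D)
    (hW : x < virtualDelay A₁ D t) :
    ∃ s, 0 ≤ s ∧ s < t - x ∧
      A₁ (t - x) - A₁ s + (A₂ (t - x) - A₂ s) - C * (t - x - s) > C * x := by
  by_contra! h
  exact hW.not_ge (virtualDelay_le hx ((le_iInf_add_fifoService hA₁ (hx.trans hxt) h).trans hD))

theorem martingale_fifo_delay_bound_general
    {Ω : Type*} {m0 : MeasurableSpace Ω} (μmeas : Measure Ω)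
    (n : ℕ)
    (K γ C C₁ : ℝ)
    (A₁ A₂ D₁ : Ω → ℝ → ℝ)
    (hA₁mono : ∀ ω, Monotone (A₁ ω))
    -- the martingale sample-path bound (Theorem 1)
    (hSP : ∀ u σ t : ℝ, 0 ≤ u → u ≤ t →
      μmeas {ω | ∃ s, 0 ≤ s ∧ s < t - u ∧
          (A₁ ω (t - u) - A₁ ω s) + (A₂ ω t - A₂ ω s) - C * (t - s) > σ}
        ≤ ENNReal.ofReal (K ^ n * Real.exp (-γ * (C₁ * u + σ))))
    (t d : ℝ) (hd : 0 ≤ d) (hdt : d ≤ t)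
    -- the FIFO service-curve property with free parameter x = d
    (hSC : ∀ ω, D₁ ω t ≥
      ⨅ s : Set.Icc (0 : ℝ) t, (A₁ ω s +
        (if t - (s : ℝ) > d then
          max (C * (t - (s : ℝ)) - (A₂ ω (t - d) - A₂ ω s)) 0 else 0)))
    (W₁ : Ω → ℝ)
    (hW₁ : ∀ ω, W₁ ω = sInf {e : ℝ | 0 ≤ e ∧ A₁ ω (t - e) ≤ D₁ ω t}) :
    μmeas {ω | W₁ ω > d} ≤ ENNReal.ofReal (K ^ n * Real.exp (-γ * C * d)) := by
  have hdelay : {ω | W₁ ω > d} ⊆ {ω | ∃ s, 0 ≤ s ∧ s < t - d - 0 ∧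
      (A₁ ω (t - d - 0) - A₁ ω s) + (A₂ ω (t - d) - A₂ ω s) - C * (t - d - s) > C * d} :=
    fun ω hω => by
      simpa using exists_backlog_gt_of_lt_virtualDelay (hA₁mono ω) hd hdt (hSC ω)
        (hω.trans_eq (hW₁ ω))
  calc μmeas {ω | W₁ ω > d}
      ≤ ENNReal.ofReal (K ^ n * Real.exp (-γ * (C₁ * 0 + C * d))) :=
        (measure_mono hdelay).trans (hSP 0 (C * d) (t - d) le_rfl (by linarith))
    _ = ENNReal.ofReal (K ^ n * Real.exp (-γ * C * d)) := by ring_nf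

/-- Martingale FIFO delay bound: given the martingale sample-path bound
`P(sup_{0≤s<t-u}{A₁(s,t-u)+A₂(s,t)-C(t-s)} > σ) ≤ Kⁿ e^{-γ(C₁u+σ)}` and the FIFO
service process `S₁(s,t) = [C(t-s) - A₂(s,t-x)]₊ · 1{t-s > x}` with `x = d`, the
virtual delay `W₁(t) = inf{e ≥ 0 : A₁(t-e) ≤ D₁(t)}` satisfies
`P(W₁(t) > d) ≤ Kⁿ e^{-γ C d}`, with `K = ρ((ρ-p)/(1-p))^{p/ρ-1}` and
`γ = (λ+μ)(1-ρ)/(P-c)`. -/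
theorem martingale_fifo_delay_bound
    {Ω : Type*} {m0 : MeasurableSpace Ω} (μmeas : Measure Ω) [IsProbabilityMeasure μmeas]
    (lam mu P c : ℝ) (hlam : 0 < lam) (hmu : 0 < mu) (hc : 0 < c) (hPc : c < P)
    (n₁ n₂ : ℕ) (n : ℕ) (hn : n = n₁ + n₂)
    (p ρ K γ C C₁ : ℝ)
    (hp : p = mu / (lam + mu)) (hρ : ρ = p * P / c) (hρ1 : ρ < 1)
    (hK : K = ρ * ((ρ - p) / (1 - p)) ^ (p / ρ - 1))
    (hγ : γ = (lam + mu) * (1 - ρ) / (P - c))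
    (hC : C = (n : ℝ) * c) (hC₁ : C₁ = (n₁ : ℝ) * c)
    (A₁ A₂ D₁ : Ω → ℝ → ℝ)
    (hA₁mono : ∀ ω, Monotone (A₁ ω)) (hA₂mono : ∀ ω, Monotone (A₂ ω))
    -- the martingale sample-path bound (Theorem 1)
    (hSP : ∀ u σ t : ℝ, 0 ≤ u → u ≤ t →
      μmeas {ω | ∃ s, 0 ≤ s ∧ s < t - u ∧
          (A₁ ω (t - u) - A₁ ω s) + (A₂ ω t - A₂ ω s) - C * (t - s) > σ}
        ≤ ENNReal.ofReal (K ^ n * Real.exp (-γ * (C₁ * u + σ))))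
    (t d : ℝ) (hd : 0 ≤ d) (hdt : d ≤ t)
    -- the FIFO service-curve property with free parameter x = d
    (hSC : ∀ ω, D₁ ω t ≥
      ⨅ s : Set.Icc (0 : ℝ) t, (A₁ ω s +
        (if t - (s : ℝ) > d then
          max (C * (t - (s : ℝ)) - (A₂ ω (t - d) - A₂ ω s)) 0 else 0)))
    (W₁ : Ω → ℝ)
    (hW₁ : ∀ ω, W₁ ω = sInf {e : ℝ | 0 ≤ e ∧ A₁ ω (t - e) ≤ D₁ ω t}) :
    μmeas {ω | W₁ ω > d} ≤ ENNReal.ofReal (K ^ n * Real.exp (-γ * C * d)) :=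
  martingale_fifo_delay_bound_general (m0 := m0) μmeas n K γ C C₁ A₁ A₂ D₁ hA₁mono hSP t d hd hdt
    hSC W₁ hW₁
end
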